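/- arXiv:2310.02204 — 5 statements merged into one kernel-verified Lean document; each statement's English description precedes it below -/
import Mathlib

section
/- Let A and B be m×m matrices over ℚ such that rank(A·B·A) = rank(A). Then there exists an invertible m×m matrix C over ℚ such that A·(B·A)ⁿ = A·Cⁿ for all n ≥ 0. -/
/-!
Transposing, `A (BA)ⁿ = A Cⁿ` becomes `((BA)ᵀ)ⁿ Aᵀ = (Cᵀ)ⁿ Aᵀ`, a statement about column vectors
in `W = range Aᵀ`. The map `(BA)ᵀ` sends `W` onto `range (ABA)ᵀ ⊆ W`, and the rank hypothesis makes
this inclusion an equality. Extending `(BA)ᵀ|_W` by the identity on a complement of `W` gives an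
invertible map that agrees with `(BA)ᵀ` on `W`, and therefore so do all of its powers.
-/

open Matrix

theorem Set.EqOn.iterate {α : Type*} {f g : α → α} {s : Set α} (h : s.EqOn g f)
    (hf : s.MapsTo f s) (n : ℕ) : s.EqOn g^[n] f^[n] := by
  induction n with
  | zero => exact fun _ _ => rfl
  | succ n ih =>
    intro x hx
    rw [Function.iterate_succ_apply, Function.iterate_succ_apply, h hx]
    exact ih (hf hx)

namespace Module.End

variable {K V : Type*} [DivisionRing K] [AddCommGroup V] [Module K V] [FiniteDimensional K V]

theorem exists_isUnit_eqOn_of_le_map (f : Module.End K V) {W : Submodule K V}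
    (hW : W ≤ W.map f) : ∃ g : Module.End K V, IsUnit g ∧ Set.EqOn g f W := by
  obtain ⟨W', hW'⟩ := W.exists_isCompl
  -- `g` is `f` on `W` and the identity on a complement `W'`, so its range contains `f(W) ⊇ W` and `W'`.
  let g := LinearMap.ofIsCompl hW' (f ∘ₗ W.subtype) W'.subtype
  have hg : Set.EqOn g f W := fun x hx => LinearMap.ofIsCompl_apply_left hW' ⟨x, hx⟩
  refine ⟨g, (LinearMap.isUnit_iff_range_eq_top g).2 ?_, hg⟩
  have hW_le : W ≤ LinearMap.range g := by
    refine hW.trans ?_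
    rintro _ ⟨x, hx, rfl⟩
    exact ⟨x, hg hx⟩
  have hW'_le : W' ≤ LinearMap.range g := fun x hx =>
    ⟨x, LinearMap.ofIsCompl_apply_right hW' ⟨x, hx⟩⟩
  exact eq_top_iff.2 (hW'.sup_eq_top ▸ sup_le hW_le hW'_le)

end Module.End

namespace Matrix

variable {n K : Type*} [Fintype n] [DecidableEq n] [Field K]

theorem exists_isUnit_pow_mul_eq_of_rank_mul_mul_eq {M N : Matrix n n K}
    (h : (M * N * M).rank = M.rank) :
    ∃ D : Matrix n n K, IsUnit D ∧ ∀ k : ℕ, (M * N) ^ k * M = D ^ k * M := by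
  set W := LinearMap.range M.toLin'
  set f := (M * N).toLin'
  have hmap : W.map f = LinearMap.range (M * N * M).toLin' := by
    rw [toLin'_mul (M * N) M, LinearMap.range_comp]
  have hle : W.map f ≤ W := by
    rw [hmap, mul_assoc, toLin'_mul]
    exact LinearMap.range_comp_le_range _ _
  have heq : W.map f = W := by
    refine Submodule.eq_of_le_of_finrank_eq hle ?_
    rw [hmap]
    exact h
  obtain ⟨g, hg, hgf⟩ := Module.End.exists_isUnit_eqOn_of_le_map f heq.ge
  refine ⟨LinearMap.toMatrix' g, LinearMap.isUnit_toMatrix'_iff.2 hg, fun k => ?_⟩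
  refine toLin'.injective (LinearMap.ext fun v => ?_)
  have hfW : Set.MapsTo f W W := fun x hx => hle ⟨x, hx, rfl⟩
  rw [toLin'_mul, toLin'_mul, toLin'_pow, toLin'_pow, toLin'_toMatrix', LinearMap.comp_apply,
    LinearMap.comp_apply, Module.End.coe_pow, Module.End.coe_pow]
  exact (hgf.iterate hfW k (LinearMap.mem_range_self _ v)).symm

end Matrix

theorem stmt_5 (m : ℕ) (A B : Matrix (Fin m) (Fin m) ℚ)
    (hrank : (A * B * A).rank = A.rank) :
    ∃ C : Matrix (Fin m) (Fin m) ℚ, IsUnit C ∧ ∀ n : ℕ, A * (B * A) ^ n = A * C ^ n := by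
  have hrank' : (Aᵀ * Bᵀ * Aᵀ).rank = Aᵀ.rank := by
    rwa [← transpose_mul, ← transpose_mul, ← mul_assoc, rank_transpose, rank_transpose]
  obtain ⟨D, hD, hpow⟩ := exists_isUnit_pow_mul_eq_of_rank_mul_mul_eq hrank'
  refine ⟨Dᵀ, (isUnit_transpose D).2 hD, fun n => transpose_injective ?_⟩
  simpa [transpose_mul, transpose_pow] using hpow n
end

section
/- Let A be a weighted automaton over ℚ with m states. Then there exists an equivalent weighted automaton A' with 2m states such that all transition matrix entries of A' are nonnegative and all entries of the initial vector of A' are nonnegative (while the final vector may have negative entries). -/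
open Matrix

/-- A weighted automaton over alphabet `α` with `m` states and rational weights. -/
structure WA (α : Type) (m : ℕ) where
  M : α → Matrix (Fin m) (Fin m) ℚ
  I : Fin m → ℚ
  F : Fin m → ℚ

/-- The function recognized by a weighted automaton. -/
def WA.eval {α : Type} {m : ℕ} (A : WA α m) (w : List α) : ℚ :=
  A.I ⬝ᵥ (((w.map A.M).prod) *ᵥ A.F)

/-!
Split every state `q` into `q₊ = inl q` and `q₋ = inr q`, and every transition matrix as
`M = M⁺ - M⁻`. The folding matrix `S`, sending `q₊ ↦ q` and `q₋ ↦ -q`, intertwines the split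
matrix `M̂ = [[M⁺, M⁻], [M⁻, M⁺]]` with `M`, i.e. `M̂ S = S M`, hence also their products along any
word. With initial vector `(I⁺, I⁻)` and final vector `S F`, the split automaton therefore computes
`(I⁺, I⁻) M̂(w) S F = (I⁺, I⁻) S M(w) F = (I⁺ - I⁻) M(w) F`.
-/

namespace Matrix

section Reindex

variable {R : Type*} [Semiring R] {n p : Type*} [Fintype n] [DecidableEq n] [Fintype p]
  [DecidableEq p]

theorem dotProduct_list_prod_map_reindex_mulVec (e : n ≃ p) (v : n → R)
    (l : List (Matrix n n R)) (u : n → R) :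
    (v ∘ e.symm) ⬝ᵥ ((l.map (reindex e e)).prod *ᵥ (u ∘ e.symm)) = v ⬝ᵥ (l.prod *ᵥ u) := by
  rw [← coe_reindexAlgEquiv ℕ R, ← map_list_prod, coe_reindexAlgEquiv, reindex_apply,
    submatrix_mulVec_equiv, Equiv.symm_symm, Function.comp_assoc, Equiv.symm_comp_self,
    Function.comp_id, comp_equiv_dotProduct_comp_equiv]

end Reindex

section SignSplit

variable {R : Type*} [Ring R] [Lattice R] {n : Type*}

def signSplit (M : Matrix n n R) : Matrix (n ⊕ n) (n ⊕ n) R :=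
  fromBlocks (M.map (·⁺)) (M.map (·⁻)) (M.map (·⁻)) (M.map (·⁺))

theorem signSplit_nonneg (M : Matrix n n R) (i j : n ⊕ n) : 0 ≤ signSplit M i j := by
  rcases i with i | i <;> rcases j with j | j <;> simp [signSplit]

variable [IsOrderedAddMonoid R]

theorem map_posPart_sub_map_negPart (M : Matrix n n R) : M.map (·⁺) - M.map (·⁻) = M := by
  ext i j
  simp

variable [DecidableEq n]

variable (R n) in
def signFold : Matrix (n ⊕ n) n R := fromRows 1 (-1)

variable [Fintype n]

theorem signSplit_mul_signFold (M : Matrix n n R) :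
    signSplit M * signFold R n = signFold R n * M := by
  simp only [signSplit, signFold, fromBlocks_mul_fromRows, fromRows_mul, Matrix.mul_one,
    Matrix.mul_neg, Matrix.neg_mul, Matrix.one_mul, ← sub_eq_add_neg,
    map_posPart_sub_map_negPart]
  rw [← neg_sub, map_posPart_sub_map_negPart]

theorem list_prod_map_signSplit_mul_signFold (l : List (Matrix n n R)) :
    (l.map signSplit).prod * signFold R n = signFold R n * l.prod := by
  induction l with
  | nil => simp
  | cons M l ih =>
    rw [List.map_cons, List.prod_cons, List.prod_cons, Matrix.mul_assoc, ih, ← Matrix.mul_assoc,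
      signSplit_mul_signFold, Matrix.mul_assoc]

theorem sumElim_posPart_negPart_vecMul_signFold (v : n → R) :
    Sum.elim v⁺ v⁻ ᵥ* signFold R n = v := by
  rw [signFold, sumElim_vecMul_fromRows, vecMul_one, vecMul_neg, vecMul_one, ← sub_eq_add_neg,
    posPart_sub_negPart]

theorem dotProduct_list_prod_map_signSplit_mulVec (v : n → R) (l : List (Matrix n n R))
    (u : n → R) :
    Sum.elim v⁺ v⁻ ⬝ᵥ ((l.map signSplit).prod *ᵥ (signFold R n *ᵥ u)) = v ⬝ᵥ (l.prod *ᵥ u) := by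
  rw [mulVec_mulVec, list_prod_map_signSplit_mul_signFold, ← mulVec_mulVec, dotProduct_mulVec,
    sumElim_posPart_negPart_vecMul_signFold]

end SignSplit

end Matrix

theorem stmt_12 (α : Type) (m : ℕ) (A : WA α m) :
    ∃ B : WA α (2 * m),
      (∀ a : α, ∀ i j, 0 ≤ B.M a i j) ∧
      (∀ i, 0 ≤ B.I i) ∧
      (∀ w : List α, B.eval w = A.eval w) := by
  let e : Fin m ⊕ Fin m ≃ Fin (2 * m) := finSumFinEquiv.trans (finCongr (two_mul m).symm)
  refine ⟨⟨reindex e e ∘ signSplit ∘ A.M, Sum.elim A.I⁺ A.I⁻ ∘ e.symm,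
    (signFold ℚ (Fin m) *ᵥ A.F) ∘ e.symm⟩, fun a i j => signSplit_nonneg _ _ _, fun i => ?_,
    fun w => ?_⟩
  · show 0 ≤ Sum.elim A.I⁺ A.I⁻ (e.symm i)
    rcases e.symm i with q | q
    exacts [posPart_nonneg (A.I q), negPart_nonneg (A.I q)]
  · rw [WA.eval, WA.eval, ← List.map_map, dotProduct_list_prod_map_reindex_mulVec, ← List.map_map,
      dotProduct_list_prod_map_signSplit_mulVec]
end

section
/- Let A be an unambiguous weighted automaton over ℚ with set of states Q of size m, and let u, v, w ∈ Σ*. Then there exist natural numbers m' and λ > 0 and a rational number d ∈ ℚ such that A(u v^{m' + λn} w) = dⁿ · A(u v^{m'} w) for all n ∈ ℕ. -/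
open Matrix

/-- A run of the automaton over a word: a path starting in a state with nonzero
initial weight, ending in a state with nonzero final weight, all transitions nonzero. -/
def WA.IsRun {α : Type} {m : ℕ} (A : WA α m) (w : List α)
    (p : Fin (w.length + 1) → Fin m) : Prop :=
  A.I (p 0) ≠ 0 ∧ A.F (p (Fin.last w.length)) ≠ 0 ∧
    ∀ i : Fin w.length, A.M (w.get i) (p i.castSucc) (p i.succ) ≠ 0

/-- An automaton is unambiguous if every word has at most one run. -/
def WA.Unambiguous {α : Type} {m : ℕ} (A : WA α m) : Prop :=
  ∀ w : List α, ∀ p q : Fin (w.length + 1) → Fin m,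
    A.IsRun w p → A.IsRun w q → p = q

namespace S15
variable {α : Type} {m : ℕ}

def FW (A : WA α m) (W : List α) (p : Fin (W.length + 1) → Fin m) : ℚ :=
  A.I (p 0) * (∏ i : Fin W.length, A.M (W.get i) (p i.castSucc) (p i.succ)) * A.F (p (Fin.last W.length))

lemma aux_sum (A : WA α m) (W : List α) (x : Fin m → ℚ) :
    x ⬝ᵥ ((W.map A.M).prod *ᵥ A.F)
      = ∑ p : Fin (W.length + 1) → Fin m,
          x (p 0) * (∏ i : Fin W.length, A.M (W.get i) (p i.castSucc) (p i.succ))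
            * A.F (p (Fin.last W.length)) := by
  induction W generalizing x with
  | nil =>
      simp [dotProduct]
      rw [← (Equiv.funUnique (Fin 1) (Fin m)).symm.sum_comp]
      simp [Equiv.funUnique, Fin.last]
  | cons a W ih =>
      have h1 : ((a :: W).map A.M).prod *ᵥ A.F = A.M a *ᵥ ((W.map A.M).prod *ᵥ A.F) := by
        simp [Matrix.mulVec_mulVec]
      rw [h1, Matrix.dotProduct_mulVec, ih]
      conv_rhs => simp only [List.length_cons]
      conv_rhs => rw [← (Fin.consEquiv (fun _ : Fin (W.length + 1 + 1) => Fin m)).sum_comp,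
        Fintype.sum_prod_type, Finset.sum_comm]
      refine Finset.sum_congr rfl (fun p _ => ?_)
      have hv : (x ᵥ* A.M a) (p 0) = ∑ q : Fin m, x q * A.M a q (p 0) := by
        simp [Matrix.vecMul, dotProduct]
      rw [hv, Finset.sum_mul, Finset.sum_mul]
      refine Finset.sum_congr rfl (fun q _ => ?_)
      simp only [Fin.consEquiv_apply]
      have hprod : (∏ i : Fin (W.length + 1),
          A.M ((a :: W).get i) (Fin.cons (α := fun _ => Fin m) q p i.castSucc) (Fin.cons (α := fun _ => Fin m) q p i.succ))
          = A.M a q (p 0) * ∏ i : Fin W.length, A.M (W.get i) (p i.castSucc) (p i.succ) := by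
        rw [Fin.prod_univ_succ]
        congr 1
      rw [hprod]
      have hlast : Fin.cons (α := fun _ => Fin m) q p (Fin.last (W.length + 1)) = p (Fin.last W.length) := by
        rw [show Fin.last (W.length + 1) = (Fin.last W.length).succ from rfl, Fin.cons_succ]
      rw [hlast, Fin.cons_zero]
      ring

lemma eval_eq_sum (A : WA α m) (W : List α) :
    A.eval W = ∑ p : Fin (W.length + 1) → Fin m, FW A W p :=
  aux_sum A W A.I

def WAIsRun (A : WA α m) (w : List α) (p : Fin (w.length + 1) → Fin m) : Prop :=
  A.IsRun w p

def trans (A : WA α m) (W : List α) (p : ℕ → Fin m) (i : ℕ) : ℚ :=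
  ((W.map A.M).getD i 1) (p i) (p (i + 1))

def NRun (A : WA α m) (W : List α) (p : ℕ → Fin m) : Prop :=
  A.I (p 0) ≠ 0 ∧ A.F (p W.length) ≠ 0 ∧ ∀ i < W.length, trans A W p i ≠ 0

def NW (A : WA α m) (W : List α) (p : ℕ → Fin m) : ℚ :=
  A.I (p 0) * (∏ i ∈ Finset.range W.length, trans A W p i) * A.F (p W.length)

lemma trans_lt (A : WA α m) (W : List α) (p : ℕ → Fin m) {i : ℕ} (h : i < W.length) :
    trans A W p i = A.M (W.get ⟨i, h⟩) (p i) (p (i + 1)) := by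
  unfold trans
  rw [List.getD_eq_getElem _ _ (by simpa using h)]
  simp

/-- restriction of an ℕ-path to a Fin-path -/
def rest (W : List α) (p : ℕ → Fin m) : Fin (W.length + 1) → Fin m := fun i => p i.val

/-- clamped extension of a Fin-path to an ℕ-path -/
def extd (W : List α) (q : Fin (W.length + 1) → Fin m) : ℕ → Fin m :=
  fun i => q ⟨min i W.length, by omega⟩

lemma nrun_of_isRun (A : WA α m) (W : List α) (q : Fin (W.length + 1) → Fin m)
    (h : WAIsRun A W q) : NRun A W (extd W q) := by
  obtain ⟨h1, h2, h3⟩ := h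
  refine ⟨?_, ?_, ?_⟩
  · have : extd W q 0 = q 0 := by
      simp only [extd]
      congr 1
    rw [this]; exact h1
  · convert h2 using 2
    simp [extd, Fin.last]
  · intro i hi
    rw [trans_lt A W _ hi]
    have e1 : extd W q i = q ⟨i, by omega⟩ := by simp [extd, Nat.min_eq_left (by omega : i ≤ W.length)]
    have e2 : extd W q (i + 1) = q ⟨i + 1, by omega⟩ := by
      simp [extd, Nat.min_eq_left (by omega : i + 1 ≤ W.length)]
    rw [e1, e2]
    exact h3 ⟨i, hi⟩

lemma isRun_of_nrun (A : WA α m) (W : List α) (p : ℕ → Fin m)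
    (h : NRun A W p) : WAIsRun A W (rest W p) := by
  obtain ⟨h1, h2, h3⟩ := h
  refine ⟨h1, ?_, ?_⟩
  · simpa [rest, Fin.last] using h2
  · intro i
    have := h3 i.val i.isLt
    rw [trans_lt A W _ i.isLt] at this
    simpa [rest] using this

lemma FW_eq_NW (A : WA α m) (W : List α) (q : Fin (W.length + 1) → Fin m) :
    FW A W q = NW A W (extd W q) := by
  unfold FW NW
  congr 1
  · congr 1
    · rw [← Fin.prod_univ_eq_prod_range]
      refine Finset.prod_congr rfl (fun i _ => ?_)
      rw [trans_lt A W _ i.isLt]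
      have e1 : extd W q i.val = q i.castSucc := by
        simp only [extd]
        congr 1
        simp [Fin.ext_iff, Nat.min_eq_left (by omega : i.val ≤ W.length)]
      have e2 : extd W q (i.val + 1) = q i.succ := by
        simp only [extd]
        congr 1
        simp [Fin.ext_iff, Nat.min_eq_left (by omega : i.val + 1 ≤ W.length)]
      rw [e1, e2]
  · congr 1
    simp [extd, Fin.last]

lemma FW_eq_zero (A : WA α m) (W : List α) (q : Fin (W.length + 1) → Fin m)
    (h : ¬ WAIsRun A W q) : FW A W q = 0 := by
  unfold WAIsRun WA.IsRun at h
  push_neg at h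
  by_cases h1 : A.I (q 0) = 0
  · simp [FW, h1]
  by_cases h2 : A.F (q (Fin.last W.length)) = 0
  · simp [FW, h2]
  obtain ⟨i, hi⟩ := h h1 h2
  unfold FW
  rw [Finset.prod_eq_zero (Finset.mem_univ i) hi]
  ring

def Unamb (A : WA α m) : Prop :=
  ∀ w : List α, ∀ p q : Fin (w.length + 1) → Fin m,
    WAIsRun A w p → WAIsRun A w q → p = q

lemma NW_eq_FW_rest (A : WA α m) (W : List α) (p : ℕ → Fin m) (h : NRun A W p) :
    FW A W (rest W p) = NW A W p := by
  unfold FW NW rest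
  congr 1
  · congr 1
    rw [← Fin.prod_univ_eq_prod_range]
    refine Finset.prod_congr rfl (fun i _ => ?_)
    rw [trans_lt A W _ i.isLt]
    rfl

lemma eval_eq_of_nrun (A : WA α m) (hA : Unamb A) (W : List α) (p : ℕ → Fin m)
    (h : NRun A W p) : A.eval W = NW A W p := by
  rw [eval_eq_sum, ← NW_eq_FW_rest A W p h]
  refine Finset.sum_eq_single_of_mem _ (Finset.mem_univ _) (fun q _ hq => ?_)
  refine FW_eq_zero A W q (fun hr => hq ?_)
  exact hA W q (rest W p) hr (isRun_of_nrun A W p h)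

lemma eval_eq_zero (A : WA α m) (W : List α)
    (h : ∀ p : ℕ → Fin m, ¬ NRun A W p) : A.eval W = 0 := by
  rw [eval_eq_sum]
  refine Finset.sum_eq_zero (fun q _ => ?_)
  refine FW_eq_zero A W q (fun hr => h (extd W q) (nrun_of_isRun A W q hr))

lemma insert_run (A : WA α m) (x y t : List α) (hy : y ≠ []) (p : ℕ → Fin m)
    (hp : NRun A (x ++ y ++ t) p)
    (hcyc : p x.length = p (x.length + y.length)) :
    ∃ q : ℕ → Fin m, NRun A (x ++ y ++ (y ++ t)) q ∧
      q x.length = q (x.length + y.length) ∧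
      (∏ i ∈ Finset.range y.length, trans A (x ++ y ++ (y ++ t)) q (x.length + i))
        = (∏ i ∈ Finset.range y.length, trans A (x ++ y ++ t) p (x.length + i)) ∧
      NW A (x ++ y ++ (y ++ t)) q
        = (∏ i ∈ Finset.range y.length, trans A (x ++ y ++ t) p (x.length + i))
            * NW A (x ++ y ++ t) p := by
  set a := x.length with ha
  set b := y.length with hb
  have hb0 : 0 < b := List.length_pos_iff.mpr hy
  set W := x ++ y ++ t with hW
  set W' := x ++ y ++ (y ++ t) with hW'
  set c := t.length with hc
  have hWlen : W.length = a + b + c := by simp [hW]; try omega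
  have hW'len : W'.length = a + b + (b + c) := by simp [hW']; try omega
  set q : ℕ → Fin m := fun i => if i < a + b then p i else p (i - b) with hq
  have lxy : ((x ++ y).map A.M).length = a + b := by simp; try omega
  have lx : (x.map A.M).length = a := by simp [ha]
  have ly : (y.map A.M).length = b := by simp [hb]
  have lt' : (t.map A.M).length = c := by simp [hc]
  have hL1 : ∀ i < a + b, (W'.map A.M).getD i 1 = (W.map A.M).getD i 1 := by
    intro i hi
    have e1 : W'.map A.M = ((x ++ y).map A.M) ++ ((y ++ t).map A.M) := by simp [hW']
    have e2 : W.map A.M = ((x ++ y).map A.M) ++ (t.map A.M) := by simp [hW]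
    rw [e1, e2, List.getD_append _ _ _ _ (by omega), List.getD_append _ _ _ _ (by omega)]
  have hL2 : ∀ i, a + b ≤ i → (W'.map A.M).getD i 1 = (W.map A.M).getD (i - b) 1 := by
    intro i hi
    have e1 : W'.map A.M = ((x ++ y).map A.M) ++ ((y.map A.M) ++ (t.map A.M)) := by simp [hW']
    have e2 : W.map A.M = ((x.map A.M) ++ (y.map A.M)) ++ (t.map A.M) := by simp [hW]
    have lxy2 : ((x.map A.M) ++ (y.map A.M)).length = a + b := by simp; try omega
    rw [e1, e2, List.getD_append_right _ _ _ _ (by omega), lxy]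
    rcases lt_or_ge i (a + b + b) with h2 | h2
    · rw [List.getD_append _ _ _ _ (by omega),
        List.getD_append _ _ _ _ (by omega),
        List.getD_append_right _ _ _ _ (by omega), lx]
      congr 1; omega
    · rw [List.getD_append_right _ _ _ _ (by omega), ly,
        List.getD_append_right _ _ _ _ (by omega), lxy2]
      congr 1; omega
  -- transition lemmas
  have hT1 : ∀ i < a + b, trans A W' q i = trans A W p i := by
    intro i hi
    unfold trans
    rw [hL1 i hi]
    have hqi : q i = p i := by simp only [hq]; rw [if_pos hi]
    have hqi1 : q (i + 1) = p (i + 1) := by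
      rcases lt_or_ge (i + 1) (a + b) with h | h
      · simp only [hq]; rw [if_pos h]
      · have e : i + 1 = a + b := by omega
        simp only [hq]
        rw [if_neg (by omega)]
        have e2 : i + 1 - b = a := by omega
        rw [e2, hcyc, e]
    rw [hqi, hqi1]
  have hT2 : ∀ i, a + b ≤ i → trans A W' q i = trans A W p (i - b) := by
    intro i hi
    unfold trans
    rw [hL2 i hi]
    have hqi : q i = p (i - b) := by simp only [hq]; rw [if_neg (by omega)]
    have hqi1 : q (i + 1) = p (i - b + 1) := by
      simp only [hq]
      rw [if_neg (by omega)]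
      congr 1; omega
    rw [hqi, hqi1]
  refine ⟨q, ?_, ?_, ?_, ?_⟩
  · obtain ⟨h1, h2, h3⟩ := hp
    refine ⟨?_, ?_, ?_⟩
    · have : q 0 = p 0 := by simp only [hq]; rw [if_pos (by omega)]
      rw [this]; exact h1
    · have : q W'.length = p W.length := by
        simp only [hq]
        rw [if_neg (by omega)]
        congr 1; omega
      rw [this]; exact h2
    · intro i hi
      rcases lt_or_ge i (a + b) with h | h
      · rw [hT1 i h]; exact h3 i (by omega)
      · rw [hT2 i h]; exact h3 (i - b) (by omega)
  · have e1 : q a = p a := by simp only [hq]; rw [if_pos (by omega)]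
    have e2 : q (a + b) = p a := by
      simp only [hq]; rw [if_neg (by omega)]; congr 1; omega
    rw [e1, e2]
  · exact Finset.prod_congr rfl (fun i hi => by
      rw [hT1 (a + i) (by simp at hi; omega)])
  · unfold NW
    have e0 : q 0 = p 0 := by simp only [hq]; rw [if_pos (by omega)]
    have eL : q W'.length = p W.length := by
      simp only [hq]; rw [if_neg (by omega)]; congr 1; omega
    rw [e0, eL]
    have p1 : (∏ i ∈ Finset.range (a + b), trans A W' q i)
        = (∏ i ∈ Finset.range a, trans A W p i) * ∏ i ∈ Finset.range b, trans A W p (a + i) := by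
      rw [← Finset.prod_range_add]
      refine Finset.prod_congr rfl (fun i hi => hT1 i (by simp at hi; omega))
    have p2 : (∏ i ∈ Finset.range (b + c), trans A W' q (a + b + i))
        = ∏ i ∈ Finset.range (b + c), trans A W p (a + i) := by
      refine Finset.prod_congr rfl (fun i hi => ?_)
      rw [hT2 (a + b + i) (by omega)]
      congr 1; omega
    have A1 : (∏ i ∈ Finset.range W'.length, trans A W' q i)
        = (∏ i ∈ Finset.range (a + b), trans A W' q i)
            * ∏ i ∈ Finset.range (b + c), trans A W' q (a + b + i) := by
      rw [hW'len, Finset.prod_range_add]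
    have A2 : (∏ i ∈ Finset.range W.length, trans A W p i)
        = ((∏ i ∈ Finset.range a, trans A W p i) * ∏ i ∈ Finset.range b, trans A W p (a + i))
            * ∏ i ∈ Finset.range c, trans A W p (a + b + i) := by
      rw [hWlen, Finset.prod_range_add, Finset.prod_range_add]
    have A3 : (∏ i ∈ Finset.range (b + c), trans A W p (a + i))
        = (∏ i ∈ Finset.range b, trans A W p (a + i))
            * ∏ i ∈ Finset.range c, trans A W p (a + b + i) := by
      rw [Finset.prod_range_add]
      congr 1
      refine Finset.prod_congr rfl (fun i _ => ?_)
      congr 1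
      omega
    rw [A1, p1, p2, A3, A2]
    ring

lemma flat_rep_mul (v : List α) (lam n : ℕ) :
    (List.replicate n (List.replicate lam v).flatten).flatten
      = (List.replicate (n * lam) v).flatten := by
  induction n with
  | zero => simp
  | succ n ih =>
      rw [List.replicate_succ, List.flatten_cons, ih]
      have : (n + 1) * lam = lam + n * lam := by ring
      rw [this, List.replicate_add, List.flatten_append]

lemma pump (A : WA α m) (x y z : List α) (hy : y ≠ []) (p0 : ℕ → Fin m)
    (h0 : NRun A (x ++ y ++ z) p0)
    (hc0 : p0 x.length = p0 (x.length + y.length)) (n : ℕ) :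
    ∃ p, NRun A (x ++ y ++ ((List.replicate n y).flatten ++ z)) p ∧
      p x.length = p (x.length + y.length) ∧
      (∏ i ∈ Finset.range y.length,
          trans A (x ++ y ++ ((List.replicate n y).flatten ++ z)) p (x.length + i))
        = (∏ i ∈ Finset.range y.length, trans A (x ++ y ++ z) p0 (x.length + i)) ∧
      NW A (x ++ y ++ ((List.replicate n y).flatten ++ z)) p
        = (∏ i ∈ Finset.range y.length, trans A (x ++ y ++ z) p0 (x.length + i)) ^ n
            * NW A (x ++ y ++ z) p0 := by
  induction n with
  | zero => exact ⟨p0, by simpa using h0, hc0, by simp, by simp⟩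
  | succ n ih =>
      obtain ⟨p, hrun, hcyc, hseg, hw⟩ := ih
      obtain ⟨q, hq1, hq2, hq3, hq4⟩ :=
        insert_run A x y ((List.replicate n y).flatten ++ z) hy p hrun hcyc
      have e : y ++ ((List.replicate n y).flatten ++ z)
          = (List.replicate (n + 1) y).flatten ++ z := by
        rw [List.replicate_succ, List.flatten_cons, List.append_assoc]
      rw [e] at hq1 hq3 hq4
      refine ⟨q, hq1, hq2, by rw [hq3, hseg], ?_⟩
      rw [hq4, hseg, hw]
      ring

end S15

theorem stmt_15 (α : Type) (m : ℕ) (A : WA α m) (hA : A.Unambiguous)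
    (u v w : List α) :
    ∃ m' : ℕ, ∃ d : ℚ, ∃ lam : ℕ, 0 < lam ∧
      ∀ n : ℕ,
        A.eval (u ++ (List.replicate (m' + lam * n) v).flatten ++ w) =
          d ^ n * A.eval (u ++ (List.replicate m' v).flatten ++ w) := by
  classical
  by_cases hv : v = []
  · refine ⟨0, 1, 1, one_pos, fun n => ?_⟩
    subst hv
    simp
  have hUn : S15.Unamb A := hA
  set L := v.length with hL
  have hL0 : 0 < L := List.length_pos_iff.mpr hv
  by_cases hex : ∃ K, m ≤ K ∧ ∃ p : ℕ → Fin m,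
      S15.NRun A (u ++ (List.replicate K v).flatten ++ w) p
  · obtain ⟨K, hK, p, hrun⟩ := hex
    -- pigeonhole
    obtain ⟨j1', j2', hne, heq⟩ :=
      Fintype.exists_ne_map_eq_of_card_lt
        (fun j : Fin (K + 1) => p (u.length + j.val * L)) (by simp; omega)
    -- order them
    obtain ⟨j1, j2, hlt, hle, hpe⟩ : ∃ j1 j2 : ℕ, j1 < j2 ∧ j2 ≤ K ∧
        p (u.length + j1 * L) = p (u.length + j2 * L) := by
      rcases lt_or_gt_of_ne hne with h | h
      · exact ⟨j1'.val, j2'.val, h, by omega, by rw [heq]⟩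
      · exact ⟨j2'.val, j1'.val, h, by omega, by rw [heq]⟩
    obtain ⟨lam, hlam0, hlam⟩ : ∃ lam, 0 < lam ∧ j2 = j1 + lam := ⟨j2 - j1, by omega, by omega⟩
    obtain ⟨s, hs⟩ : ∃ s, K = j1 + lam + s := ⟨K - j2, by omega⟩
    set x := u ++ (List.replicate j1 v).flatten with hx
    set y := (List.replicate lam v).flatten with hy
    set z := (List.replicate s v).flatten ++ w with hz
    have hylen : y.length = lam * L := by simp [hy, hL]
    have hyne : y ≠ [] := by
      refine List.ne_nil_of_length_pos ?_
      rw [hylen]; exact Nat.mul_pos hlam0 hL0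
    have hxlen : x.length = u.length + j1 * L := by simp [hx, hL]
    have E0 : u ++ (List.replicate K v).flatten ++ w = x ++ y ++ z := by
      rw [hs, List.replicate_add, List.replicate_add, List.flatten_append,
        List.flatten_append, hx, hy, hz]
      simp only [List.append_assoc]
    rw [E0] at hrun
    have hcyc : p x.length = p (x.length + y.length) := by
      rw [hxlen, hylen]
      have e2 : u.length + j1 * L + lam * L = u.length + j2 * L := by
        rw [hlam, add_mul]; ring
      rw [e2]
      exact hpe
    set d := ∏ i ∈ Finset.range y.length, S15.trans A (x ++ y ++ z) p (x.length + i) with hd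
    refine ⟨K, d, lam, hlam0, fun n => ?_⟩
    obtain ⟨pn, hrun_n, _, _, hwn⟩ := S15.pump A x y z hyne p hrun hcyc n
    have En : u ++ (List.replicate (K + lam * n) v).flatten ++ w
        = x ++ y ++ ((List.replicate n y).flatten ++ z) := by
      rw [hy, S15.flat_rep_mul]
      have e : K + lam * n = j1 + (lam + (n * lam + s)) := by
        have : lam * n = n * lam := mul_comm _ _
        omega
      rw [e, List.replicate_add, List.replicate_add, List.replicate_add,
        List.flatten_append, List.flatten_append, List.flatten_append, hx, hz]
      simp only [List.append_assoc]
    rw [En, S15.eval_eq_of_nrun A hUn _ pn hrun_n, hwn, E0,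
      S15.eval_eq_of_nrun A hUn _ p hrun]
  · push_neg at hex
    refine ⟨m, 0, 1, one_pos, fun n => ?_⟩
    cases n with
    | zero => simp
    | succ n =>
        rw [S15.eval_eq_zero A _ (hex (m + 1 * (n + 1)) (by omega)),
          zero_pow (Nat.succ_ne_zero n)]
        ring
end

section
/- Let M be an invertible m×m p-triangular matrix over ℚ with diagonal entries in ℕ, and x, y ∈ ℚ^m. Suppose the exponential-polynomial representation xᵀ Mⁿ y = ∑_{i=1}^k dᵢⁿ pᵢ(n) (valid for n ≥ m, with {d₁,...,d_k} the distinct diagonal values) has all pᵢ constant, and at most one p_j not identically zero. Then xᵀ · Mⁿ · y = d_jⁿ · (xᵀ · y) for all n ≥ 0. -/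
open Matrix Polynomial Finset

private lemma back_unique (q : Polynomial ℚ) (hq0 : q.coeff 0 ≠ 0) (D : ℕ)
    (s t : ℕ → ℚ)
    (hs : ∀ n, ∑ i ∈ Finset.range (D+1), q.coeff i * s (n+i) = 0)
    (ht : ∀ n, ∑ i ∈ Finset.range (D+1), q.coeff i * t (n+i) = 0)
    (N : ℕ) (hN : ∀ n, N ≤ n → s n = t n) : ∀ n, s n = t n := by
  have key : ∀ l n, N ≤ n + l → s n = t n := by
    intro l
    induction l with
    | zero => intro n hn; exact hN n (by omega)
    | succ l ih =>
      intro n hn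
      by_cases h : N ≤ n + l
      · exact ih n h
      have hs' := hs n
      have ht' := ht n
      rw [Finset.sum_range_succ'] at hs' ht'
      have h1 : ∑ i ∈ Finset.range D, q.coeff (i+1) * s (n + (i+1)) =
          ∑ i ∈ Finset.range D, q.coeff (i+1) * t (n + (i+1)) :=
        Finset.sum_congr rfl fun i _ => by rw [ih (n + (i+1)) (by omega)]
      have h2 : q.coeff 0 * s (n + 0) = q.coeff 0 * t (n + 0) := by linarith
      have := mul_left_cancel₀ hq0 h2
      simpa using this
  intro n
  exact key N n (by omega)

private lemma rec_lemma (m : ℕ) (M : Matrix (Fin m) (Fin m) ℚ) (x y : Fin m → ℚ)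
    (r : Polynomial ℚ) (hr : Polynomial.aeval M r = 0) (D : ℕ) (hD : r.natDegree < D + 1) :
    ∀ n, ∑ i ∈ Finset.range (D+1), r.coeff i * (x ⬝ᵥ ((M ^ (n+i)) *ᵥ y)) = 0 := by
  intro n
  have hsum : ∀ (s : Finset ℕ) (f : ℕ → Matrix (Fin m) (Fin m) ℚ),
      x ⬝ᵥ ((∑ i ∈ s, f i) *ᵥ y) = ∑ i ∈ s, x ⬝ᵥ (f i *ᵥ y) := by
    intro s f
    induction s using Finset.cons_induction with
    | empty => simp [Matrix.zero_mulVec]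
    | cons i s hi ih =>
      rw [Finset.sum_cons, Finset.sum_cons, Matrix.add_mulVec, dotProduct_add, ih]
  have h1 : (M ^ n * Polynomial.aeval M r) = ∑ i ∈ Finset.range (D+1), r.coeff i • M ^ (n+i) := by
    rw [Polynomial.aeval_eq_sum_range' hD, Finset.mul_sum]
    exact Finset.sum_congr rfl fun i _ => by rw [mul_smul_comm, pow_add]
  have h2 : (∑ i ∈ Finset.range (D+1), r.coeff i • M ^ (n+i)) = 0 := by
    rw [← h1, hr, mul_zero]
  calc ∑ i ∈ Finset.range (D+1), r.coeff i * (x ⬝ᵥ ((M ^ (n+i)) *ᵥ y))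
      = ∑ i ∈ Finset.range (D+1), x ⬝ᵥ ((r.coeff i • M ^ (n+i)) *ᵥ y) := by
        refine Finset.sum_congr rfl fun i _ => ?_
        rw [Matrix.smul_mulVec, dotProduct_smul, smul_eq_mul]
    _ = x ⬝ᵥ ((∑ i ∈ Finset.range (D+1), r.coeff i • M ^ (n+i)) *ᵥ y) := (hsum _ _).symm
    _ = 0 := by rw [h2]; simp [Matrix.zero_mulVec]

theorem stmt_17 (m k : ℕ) (M : Matrix (Fin m) (Fin m) ℚ)
    (hinv : IsUnit M)
    (σ : Equiv.Perm (Fin m))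
    (htri : ∀ i j : Fin m, j < i → M (σ.symm i) (σ.symm j) = 0)
    (d : Fin k → ℕ) (hinj : Function.Injective d)
    (hdiag : ∀ i : Fin m, ∃ t : Fin k, M i i = (d t : ℚ))
    (x y : Fin m → ℚ)
    (p : Fin k → Polynomial ℚ)
    (hrep : ∀ n : ℕ, m ≤ n →
      x ⬝ᵥ ((M ^ n) *ᵥ y) = ∑ t, ((d t : ℚ)) ^ n * (p t).eval (n : ℚ))
    (hconst : ∀ t, ∃ c : ℚ, p t = Polynomial.C c)
    (j : Fin k) (hj : ∀ t, t ≠ j → p t = 0) :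
    ∀ n : ℕ, x ⬝ᵥ ((M ^ n) *ᵥ y) = ((d j : ℚ)) ^ n * (x ⬝ᵥ y) := by
  classical
  obtain ⟨c, hc⟩ := hconst j
  set a : ℕ → ℚ := fun n => x ⬝ᵥ ((M ^ n) *ᵥ y) with ha
  have ha0 : a 0 = x ⬝ᵥ y := by simp [ha, Matrix.one_mulVec]
  have hrep' : ∀ n, m ≤ n → a n = (d j : ℚ) ^ n * c := by
    intro n hn
    rw [ha]
    simp only
    rw [hrep n hn, Finset.sum_eq_single j]
    · rw [hc]; simp
    · intro t _ htj; rw [hj t htj]; simp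
    · simp
  set N : Matrix (Fin m) (Fin m) ℚ := M.submatrix σ.symm σ.symm with hNdef
  have hbt : N.BlockTriangular id := fun i j hij => htri i j hij
  have hcp : M.charpoly = ∏ i, (X - C (N i i)) := by
    rw [← Matrix.charpoly_reindex σ M]
    have : reindex σ σ M = N := rfl
    rw [this, Matrix.charpoly_of_upperTriangular N hbt]
  set q : Polynomial ℚ := M.charpoly with hq
  have hqM : Polynomial.aeval M q = 0 := M.aeval_self_charpoly
  -- diagonal entries nonzero
  have hdet : M.det ≠ 0 := by
    have := (Matrix.isUnit_iff_isUnit_det M).mp hinv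
    exact IsUnit.ne_zero this
  have hdetN : N.det = ∏ i, N i i := Matrix.det_of_upperTriangular hbt
  have hdetMN : N.det = M.det := Matrix.det_submatrix_equiv_self σ.symm M
  have hdiagne : ∀ i, N i i ≠ 0 := by
    intro i
    have hne : (∏ i, N i i) ≠ 0 := by rw [← hdetN, hdetMN]; exact hdet
    exact Finset.prod_ne_zero_iff.mp hne i (Finset.mem_univ i)
  have hq0 : q.coeff 0 ≠ 0 := by
    rw [Polynomial.coeff_zero_eq_eval_zero, hcp, Polynomial.eval_prod]
    refine Finset.prod_ne_zero_iff.mpr fun i _ => ?_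
    simp only [Polynomial.eval_sub, Polynomial.eval_X, Polynomial.eval_C, zero_sub]
    exact neg_ne_zero.mpr (hdiagne i)
  have hqdeg : q.natDegree = m := by
    rw [hcp, Polynomial.natDegree_prod _ _ fun i _ => Polynomial.X_sub_C_ne_zero (N i i)]
    simp [Polynomial.natDegree_X_sub_C]
  by_cases hdj : (d j : ℚ) = 0
  · -- q-recurrence forces a ≡ 0
    have hs := rec_lemma m M x y q hqM m (by omega)
    have hzero : ∀ n, a n = 0 := by
      refine back_unique q hq0 m a (fun _ => 0) hs (fun n => by simp) (m+1) ?_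
      intro n hn
      rw [hrep' n (by omega), hdj, zero_pow (by omega), zero_mul]
    have hxy : x ⬝ᵥ y = 0 := by rw [← ha0]; exact hzero 0
    intro n
    have := hzero n
    rw [ha] at this
    simp only at this
    rw [this, hxy, mul_zero]
  · -- use Q = (X - C dj) * q
    set Q : Polynomial ℚ := (X - C ((d j : ℚ))) * q with hQ
    have hQM : Polynomial.aeval M Q = 0 := by
      rw [hQ, _root_.map_mul, hqM, mul_zero]
    have hQ0 : Q.coeff 0 ≠ 0 := by
      rw [Polynomial.coeff_zero_eq_eval_zero, hQ, Polynomial.eval_mul]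
      refine mul_ne_zero ?_ ?_
      · simpa using hdj
      · rwa [← Polynomial.coeff_zero_eq_eval_zero]
    have hQdeg : Q.natDegree = m + 1 := by
      rw [hQ, Polynomial.natDegree_mul (Polynomial.X_sub_C_ne_zero _)
        (fun h => hq0 (by simp [h])), Polynomial.natDegree_X_sub_C, hqdeg, add_comm]
    have hQdj : Q.eval ((d j : ℚ)) = 0 := by simp [hQ]
    have hs := rec_lemma m M x y Q hQM (m+1) (by omega)
    have hb : ∀ n, ∑ i ∈ Finset.range (m+1+1), Q.coeff i * ((d j : ℚ) ^ (n+i) * c) = 0 := by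
      intro n
      have heval : Q.eval ((d j : ℚ)) = ∑ i ∈ Finset.range (m+1+1), Q.coeff i * (d j : ℚ) ^ i :=
        Polynomial.eval_eq_sum_range' (by omega) _
      calc ∑ i ∈ Finset.range (m+1+1), Q.coeff i * ((d j : ℚ) ^ (n+i) * c)
          = ((d j : ℚ) ^ n * c) * ∑ i ∈ Finset.range (m+1+1), Q.coeff i * (d j : ℚ) ^ i := by
            rw [Finset.mul_sum]
            exact Finset.sum_congr rfl fun i _ => by rw [pow_add]; ring
        _ = 0 := by rw [← heval, hQdj, mul_zero]
    have hall : ∀ n, a n = (d j : ℚ) ^ n * c :=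
      back_unique Q hQ0 (m+1) a (fun n => (d j : ℚ) ^ n * c) hs hb m hrep'
    have hc0 : c = x ⬝ᵥ y := by
      have := hall 0
      rw [ha0] at this
      simpa using this.symm
    intro n
    have := hall n
    rw [ha] at this
    simp only at this
    rw [this, hc0]
end

section
/- Let Σ be a finite alphabet, R a positive integer, and A : Σ* → ℚ a function. Suppose there is a function cut : Σ^R → Σ^{<R} × ℚ such that for every word u of length R, writing cut(u) = (u', d), we have A(u·v) = d · A(u'·v) for every v ∈ Σ*. Then there exists a deterministic weighted automaton D with state set {words of length < R} computing A: concretely, define a deterministic transition function that appends letters and applies cut when length R is reached, with final weight A(u) in state u; then the unique run of D on any word w has value A(w). -/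
/-- Run the deterministic automaton whose states are words: starting from the
empty word with weight `1`, process the input with the transition function `δ`,
accumulating the product of the transition weights. -/
def detRun {α : Type} (δ : List α → α → List α × ℚ) (w : List α) : List α × ℚ :=
  w.foldl (fun s a => ((δ s.1 a).1, s.2 * (δ s.1 a).2)) ([], 1)

/-!
The run keeps the invariant that, after reading `w`, the state `u` of length `< R` and the
accumulated weight `x` satisfy `A (w ++ v) = x * A (u ++ v)` for all `v`: appending a letter
preserves it trivially, and a `cut` at length `R` preserves it by its defining property.
Taking `v = []` gives the value of the run.
-/

section DetRun

variable {α : Type} (δ : List α → α → List α × ℚ)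

@[simp]
lemma detRun_nil : detRun δ [] = ([], 1) := rfl

lemma detRun_append_singleton (w : List α) (a : α) :
    detRun δ (w ++ [a]) =
      ((δ (detRun δ w).1 a).1, (detRun δ w).2 * (δ (detRun δ w).1 a).2) := by
  simp [detRun, List.foldl_append]

lemma detRun_mem {S : Set (List α)} (hnil : [] ∈ S) (hS : ∀ u ∈ S, ∀ a, (δ u a).1 ∈ S)
    (w : List α) : (detRun δ w).1 ∈ S := by
  induction w using List.reverseRecOn with
  | nil => exact hnil
  | append_singleton w a ih =>
    rw [detRun_append_singleton]
    exact hS _ ih a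

lemma detRun_residual {A : List α → ℚ} {S : Set (List α)} (hnil : [] ∈ S)
    (hS : ∀ u ∈ S, ∀ a, (δ u a).1 ∈ S)
    (hδ : ∀ u ∈ S, ∀ a v, A (u ++ a :: v) = (δ u a).2 * A ((δ u a).1 ++ v))
    (w v : List α) : A (w ++ v) = (detRun δ w).2 * A ((detRun δ w).1 ++ v) := by
  induction w using List.reverseRecOn generalizing v with
  | nil => simp
  | append_singleton w a ih =>
    rw [detRun_append_singleton, List.append_assoc, List.singleton_append, ih,
      hδ _ (detRun_mem δ hnil hS w), mul_assoc]

end DetRun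

section CutTransition

variable {α : Type} {R : ℕ} {A : List α → ℚ} {cut : List α → List α × ℚ}

/-- On reachable states (length `< R`) the `take R` does nothing; it only keeps the successor
of every state, reachable or not, of length `< R`. -/
def cutTransition (R : ℕ) (cut : List α → List α × ℚ) (u : List α) (a : α) : List α × ℚ :=
  if u.length + 1 < R then (u ++ [a], 1) else cut ((u ++ [a]).take R)

lemma cutTransition_length_lt (hcut : ∀ u : List α, u.length = R → (cut u).1.length < R)
    (u : List α) (a : α) : (cutTransition R cut u a).1.length < R := by
  unfold cutTransition
  split_ifs with h
  · simpa using h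
  · exact hcut _ (by simp only [List.length_append, List.length_singleton, List.length_take]; omega)

lemma cutTransition_residual
    (hcut : ∀ u : List α, u.length = R → ∀ v, A (u ++ v) = (cut u).2 * A ((cut u).1 ++ v))
    {u : List α} (hu : u.length < R) (a : α) (v : List α) :
    A (u ++ a :: v) = (cutTransition R cut u a).2 * A ((cutTransition R cut u a).1 ++ v) := by
  unfold cutTransition
  split_ifs with h
  · simp
  · have hlen : (u ++ [a]).length = R := by
      simp only [List.length_append, List.length_singleton]; omega
    rw [List.take_of_length_le hlen.le, ← hcut _ hlen, List.append_assoc, List.singleton_append]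

end CutTransition

theorem stmt_19 (α : Type) (R : ℕ) (hR : 0 < R) (A : List α → ℚ)
    (cut : List α → List α × ℚ)
    (hcut : ∀ u : List α, u.length = R →
      (cut u).1.length < R ∧ ∀ v : List α, A (u ++ v) = (cut u).2 * A ((cut u).1 ++ v)) :
    ∃ δ : List α → α → List α × ℚ,
      (∀ u : List α, ∀ a : α, (δ u a).1.length < R) ∧
      (∀ w v : List α, A (w ++ v) = (detRun δ w).2 * A ((detRun δ w).1 ++ v)) ∧
      (∀ w : List α, (detRun δ w).2 * A ((detRun δ w).1) = A w) := by
  have hlen := cutTransition_length_lt (fun u hu => (hcut u hu).1)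
  have hresidual : ∀ w v : List α, A (w ++ v) =
      (detRun (cutTransition R cut) w).2 * A ((detRun (cutTransition R cut) w).1 ++ v) :=
    detRun_residual _ (S := {u | u.length < R}) hR (fun u _ a => hlen u a)
      (fun _ hu => cutTransition_residual (fun u hu => (hcut u hu).2) hu)
  refine ⟨cutTransition R cut, hlen, hresidual, fun w => ?_⟩
  simpa using (hresidual w []).symm
end
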